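/- Fix p' ∈ ℝ₊₊^{2K} and let g_{p'}(w) := max{g₁(w), g_{2,p'}(w)}. Let w' ∈ ℝ₊₊^{2K} be the unique vector satisfying w' = λ'·f_{p'}(w') with g_{p'}(w') = 1 and λ' := 1/g_{p'}(f_{p'}(w')). Then w' is componentwise minimal among all optimal solutions: for every w ∈ ℝ₊^{2K} satisfying w ≥ λ'·f_{p'}(w) componentwise and g_{p'}(w) ≤ 1, one has w' ≤ w componentwise. -/

import Mathlib

/-!
For fixed powers, `w ↦ f_{p'}(w)` behaves like a standard interference function: the
interference is affine in `w` with positive noise, so it grows strictly less than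
proportionally, and `I ↦ 1 / log₂ (1 + P / I)` is increasing and subhomogeneous by
concavity of `log`. For such maps a positive fixed point of `λ' f` lies below every `w` with
`λ' f(w) ≤ w`, by comparing `w'` with `w` at the index where `w' / w` is largest.
-/

/-- Interference at link `l`: `I_l(p, w) = ((Ṽ · diag(p) · w)_l + σ²) / v_l`. -/
noncomputable def interf {K : ℕ} (V : Matrix (Fin (2 * K)) (Fin (2 * K)) ℝ)
    (v : Fin (2 * K) → ℝ) (σ2 : ℝ) (p w : Fin (2 * K) → ℝ) (l : Fin (2 * K)) : ℝ :=
  ((∑ j, V l j * (p j * w j)) + σ2) / v l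

/-- `f_l(p, w) = d_l / (W₀ B log₂(1 + SINR_l(p, w)))` with `SINR_l = p_l / I_l(p, w)`. -/
noncomputable def rateF {K : ℕ} (V : Matrix (Fin (2 * K)) (Fin (2 * K)) ℝ)
    (v : Fin (2 * K) → ℝ) (σ2 W0 B : ℝ) (d : Fin (2 * K) → ℝ)
    (p w : Fin (2 * K) → ℝ) (l : Fin (2 * K)) : ℝ :=
  d l / (W0 * B * Real.logb 2 (1 + p l / interf V v σ2 p w l))

/-- Load constraint `g₁(w) = ‖A w‖_∞`, where the 0/1 association matrix `A` with
exactly one 1 per column is encoded by the assignment map `asg` (link `l` is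
associated to cell `asg l`). -/
noncomputable def gOne {K N : ℕ} (asg : Fin (2 * K) → Fin N) (w : Fin (2 * K) → ℝ) : ℝ :=
  ⨆ n : Fin N, ∑ l, if asg l = n then w l else 0

/-- Power constraint `g₂(w, p) = W₀ · max_j (A^{ext} diag(w) p)_j / p^{max}_j`, with
the 0/1 matrix `A^{ext}` (one 1 per column) encoded by the assignment map `aext`. -/
noncomputable def gTwo {K N : ℕ} (aext : Fin (2 * K) → Fin (K + N))
    (pmax : Fin (K + N) → ℝ) (W0 : ℝ) (w p : Fin (2 * K) → ℝ) : ℝ :=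
  W0 * ⨆ j : Fin (K + N), (∑ l, if aext l = j then w l * p l else 0) / pmax j

open Real

/-- Monotonicity and scalability of a standard interference function in the sense of Yates,
merged into a single condition. -/
def StrictlyScalable {ι : Type*} (F : (ι → ℝ) → ι → ℝ) : Prop :=
  ∀ ⦃c : ℝ⦄, 1 < c → ∀ ⦃x y : ι → ℝ⦄, 0 ≤ x → 0 ≤ y → x ≤ c • y → ∀ i, F x i < c * F y i

/-- Comparing with the largest ratio `w' i / w i = c`: if `c > 1`, strict scalability at the
maximising index gives `w' i < c * w i = w' i`. -/
theorem StrictlyScalable.le_of_eq_smul_of_smul_le {ι : Type*} [Finite ι]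
    {F : (ι → ℝ) → ι → ℝ} (hF : StrictlyScalable F) (hFpos : ∀ x, 0 ≤ x → ∀ i, 0 < F x i)
    {lam : ℝ} {w' w : ι → ℝ} (hw' : ∀ i, 0 < w' i) (hfix : w' = lam • F w')
    (hw : 0 ≤ w) (hsuper : lam • F w ≤ w) : w' ≤ w := by
  intro i
  have hfix_apply (j : ι) : w' j = lam * F w' j := congrFun hfix j
  have hlam : 0 < lam :=
    pos_of_mul_pos_left ((hfix_apply i) ▸ hw' i) (hFpos w' (fun j => (hw' j).le) i).le
  have hw_pos (j : ι) : 0 < w j := (mul_pos hlam (hFpos w hw j)).trans_le (hsuper j)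
  have : Nonempty ι := ⟨i⟩
  obtain ⟨j, hj⟩ := Finite.exists_max fun j => w' j / w j
  set c := w' j / w j
  have hle_c (k : ι) : w' k ≤ c * w k := (div_le_iff₀ (hw_pos k)).mp (hj k)
  have hc : c ≤ 1 := by
    by_contra! hc
    have hlt := hF hc (fun k => (hw' k).le) hw hle_c j
    have : w' j < w' j := calc
      w' j = lam * F w' j := hfix_apply j
      _ < lam * (c * F w j) := mul_lt_mul_of_pos_left hlt hlam
      _ = c * (lam * F w j) := by ring
      _ ≤ c * w j := mul_le_mul_of_nonneg_left (hsuper j) (by positivity)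
      _ = w' j := div_mul_cancel₀ _ (hw_pos j).ne'
    exact this.false
  calc w' i ≤ c * w i := hle_c i
    _ ≤ w i := mul_le_of_le_one_left (hw i) hc

/-- Take logarithms in Bernoulli's inequality `1 + x ≤ (1 + x / c) ^ c`. -/
theorem logb_one_add_le_mul_logb_one_add_div {b x c : ℝ} (hb : 1 < b) (hx : 0 ≤ x)
    (hc : 1 ≤ c) : logb b (1 + x) ≤ c * logb b (1 + x / c) := by
  have hc0 : 0 < c := zero_lt_one.trans_le hc
  have hbern : 1 + x ≤ (1 + x / c) ^ c := by
    simpa [mul_div_cancel₀ x hc0.ne'] using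
      one_add_mul_self_le_rpow_one_add (s := x / c) (by linarith [div_nonneg hx hc0.le]) hc
  calc logb b (1 + x) ≤ logb b ((1 + x / c) ^ c) :=
        logb_le_logb_of_le hb (by linarith) hbern
    _ = c * logb b (1 + x / c) := logb_rpow_eq_mul_logb_of_pos (by positivity)

theorem logb_one_add_div_lt_mul_logb_one_add_div {P I₁ I₂ c : ℝ} (hP : 0 < P) (hI₁ : 0 < I₁)
    (hc : 1 ≤ c) (hlt : I₁ < c * I₂) :
    logb 2 (1 + P / I₂) < c * logb 2 (1 + P / I₁) := by
  have hc0 : 0 < c := zero_lt_one.trans_le hc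
  have hI₂ : 0 < I₂ := pos_of_mul_pos_right (hI₁.trans hlt) hc0.le
  calc logb 2 (1 + P / I₂) ≤ c * logb 2 (1 + P / I₂ / c) :=
        logb_one_add_le_mul_logb_one_add_div one_lt_two (by positivity) hc
    _ < c * logb 2 (1 + P / I₁) := by
        refine mul_lt_mul_of_pos_left (logb_lt_logb one_lt_two (by positivity) ?_) hc0
        rw [div_div, mul_comm I₂]
        gcongr

section Link

variable {K : ℕ} {V : Matrix (Fin (2 * K)) (Fin (2 * K)) ℝ} {v : Fin (2 * K) → ℝ} {σ2 : ℝ}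
  {p : Fin (2 * K) → ℝ}

theorem interf_pos (hV : ∀ i j, 0 ≤ V i j) (hv : ∀ i, 0 < v i) (hσ2 : 0 < σ2) (hp : 0 ≤ p)
    {w : Fin (2 * K) → ℝ} (hw : 0 ≤ w) (l : Fin (2 * K)) : 0 < interf V v σ2 p w l := by
  have : 0 ≤ ∑ j, V l j * (p j * w j) :=
    Finset.sum_nonneg fun j _ => mul_nonneg (hV l j) (mul_nonneg (hp j) (hw j))
  exact div_pos (by linarith) (hv l)

theorem interf_lt_mul_interf (hV : ∀ i j, 0 ≤ V i j) (hv : ∀ i, 0 < v i) (hσ2 : 0 < σ2)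
    (hp : 0 ≤ p) {c : ℝ} (hc : 1 < c) {x y : Fin (2 * K) → ℝ} (hxy : x ≤ c • y)
    (l : Fin (2 * K)) : interf V v σ2 p x l < c * interf V v σ2 p y l := by
  have hsum : ∑ j, V l j * (p j * x j) ≤ c * ∑ j, V l j * (p j * y j) := by
    rw [Finset.mul_sum]
    refine Finset.sum_le_sum fun j _ => ?_
    calc V l j * (p j * x j) ≤ V l j * (p j * (c * y j)) := by
          gcongr
          · exact hV l j
          · exact hp j
          · exact hxy j
      _ = c * (V l j * (p j * y j)) := by ring
  rw [interf, interf, mul_div_assoc', div_lt_div_iff_of_pos_right (hv l)]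
  nlinarith

variable {W0 B : ℝ} {d : Fin (2 * K) → ℝ}

theorem rateF_pos (hV : ∀ i j, 0 ≤ V i j) (hv : ∀ i, 0 < v i) (hσ2 : 0 < σ2) (hW0 : 0 < W0)
    (hB : 0 < B) (hd : ∀ i, 0 < d i) (hp : ∀ i, 0 < p i) {w : Fin (2 * K) → ℝ} (hw : 0 ≤ w)
    (l : Fin (2 * K)) : 0 < rateF V v σ2 W0 B d p w l := by
  have hI := interf_pos hV hv hσ2 (fun i => (hp i).le) hw l
  exact div_pos (hd l) (mul_pos (mul_pos hW0 hB)
    (logb_pos one_lt_two (lt_add_of_pos_right 1 (div_pos (hp l) hI))))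

theorem rateF_strictlyScalable (hV : ∀ i j, 0 ≤ V i j) (hv : ∀ i, 0 < v i) (hσ2 : 0 < σ2)
    (hW0 : 0 < W0) (hB : 0 < B) (hd : ∀ i, 0 < d i) (hp : ∀ i, 0 < p i) :
    StrictlyScalable (rateF V v σ2 W0 B d p) := by
  intro c hc x y hx hy hxy l
  have hI := interf_lt_mul_interf hV hv hσ2 (fun i => (hp i).le) hc hxy l
  have hlog := logb_one_add_div_lt_mul_logb_one_add_div (hp l)
    (interf_pos hV hv hσ2 (fun i => (hp i).le) hx l) hc.le hI
  have hlog_pos (z : Fin (2 * K) → ℝ) (hz : 0 ≤ z) :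
      0 < logb 2 (1 + p l / interf V v σ2 p z l) :=
    logb_pos one_lt_two (lt_add_of_pos_right 1
      (div_pos (hp l) (interf_pos hV hv hσ2 (fun i => (hp i).le) hz l)))
  have hWB : 0 < W0 * B := mul_pos hW0 hB
  rw [rateF, rateF, mul_div_assoc', div_lt_div_iff₀ (mul_pos hWB (hlog_pos x hx))
    (mul_pos hWB (hlog_pos y hy))]
  nlinarith [mul_lt_mul_of_pos_left hlog (mul_pos hWB (hd l))]

end Link

theorem bandwidth_fixed_point_minimal_general (K N : ℕ)
    (V : Matrix (Fin (2 * K)) (Fin (2 * K)) ℝ) (hV : ∀ i j, 0 ≤ V i j)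
    (v : Fin (2 * K) → ℝ) (hv : ∀ i, 0 < v i)
    (σ2 : ℝ) (hσ2 : 0 < σ2) (W0 B : ℝ) (hW0 : 0 < W0) (hB : 0 < B)
    (d : Fin (2 * K) → ℝ) (hd : ∀ i, 0 < d i)
    (asg : Fin (2 * K) → Fin N) (aext : Fin (2 * K) → Fin (K + N))
    (pmax : Fin (K + N) → ℝ)
    (p' : Fin (2 * K) → ℝ) (hp' : ∀ i, 0 < p' i)
    (w' : Fin (2 * K) → ℝ) (hw' : ∀ i, 0 < w' i) (lam' : ℝ)
    (hfix : ∀ l, w' l = lam' * rateF V v σ2 W0 B d p' w' l) :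
    ∀ w : Fin (2 * K) → ℝ, (∀ i, 0 ≤ w i) →
      (∀ l, lam' * rateF V v σ2 W0 B d p' w l ≤ w l) →
      max (gOne asg w) (gTwo aext pmax W0 w p') ≤ 1 →
      ∀ l, w' l ≤ w l := by
  intro w hw hsuper _
  exact (rateF_strictlyScalable hV hv hσ2 hW0 hB hd hp').le_of_eq_smul_of_smul_le
    (fun x hx => rateF_pos hV hv hσ2 hW0 hB hd hp' hx) hw' (funext hfix) hw hsuper

/-- Proposition 1, minimality part: the normalized fixed point `w'`
of `f_{p'}` is componentwise minimal among all optimal solutions: every nonnegative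
`w` with `w ≥ λ'·f_{p'}(w)` and `g_{p'}(w) ≤ 1` satisfies `w' ≤ w` componentwise. -/
theorem bandwidth_fixed_point_minimal (K N : ℕ) (hK : 1 ≤ K) (hN : 1 ≤ N)
    (V : Matrix (Fin (2 * K)) (Fin (2 * K)) ℝ) (hV : ∀ i j, 0 ≤ V i j)
    (v : Fin (2 * K) → ℝ) (hv : ∀ i, 0 < v i)
    (σ2 : ℝ) (hσ2 : 0 < σ2) (W0 B : ℝ) (hW0 : 0 < W0) (hB : 0 < B)
    (d : Fin (2 * K) → ℝ) (hd : ∀ i, 0 < d i)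
    (asg : Fin (2 * K) → Fin N) (aext : Fin (2 * K) → Fin (K + N))
    (pmax : Fin (K + N) → ℝ) (hpmax : ∀ j, 0 < pmax j)
    (p' : Fin (2 * K) → ℝ) (hp' : ∀ i, 0 < p' i)
    (w' : Fin (2 * K) → ℝ) (hw' : ∀ i, 0 < w' i) (lam' : ℝ)
    (hlam' : lam' = 1 / max (gOne asg (fun l => rateF V v σ2 W0 B d p' w' l))
      (gTwo aext pmax W0 (fun l => rateF V v σ2 W0 B d p' w' l) p'))
    (hfix : ∀ l, w' l = lam' * rateF V v σ2 W0 B d p' w' l)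
    (hunit : max (gOne asg w') (gTwo aext pmax W0 w' p') = 1) :
    ∀ w : Fin (2 * K) → ℝ, (∀ i, 0 ≤ w i) →
      (∀ l, lam' * rateF V v σ2 W0 B d p' w l ≤ w l) →
      max (gOne asg w) (gTwo aext pmax W0 w p') ≤ 1 →
      ∀ l, w' l ≤ w l :=
  bandwidth_fixed_point_minimal_general K N V hV v hv σ2 hσ2 W0 B hW0 hB d hd asg aext pmax p' hp'
    w' hw' lam' hfix
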